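/- arXiv:1611.06414 — 4 statements merged into one kernel-verified Lean document; each statement's English description precedes it below -/
import Mathlib

section
/- Let A be a finite set of integers. Then Σ_n (σ_k(n) − s_k(n))^2 ≤ k^4 · M_{k−1}, where σ_k(n) counts representations n = x_1+...+x_k with x_i ∈ A, s_k(n) counts those with pairwise distinct x_i, and M_{k−1} = Σ_n σ_{k−1}(n)^2. -/
open Finset

open scoped Classical in
/-- `M_k(A)`: number of solutions of `x₁+⋯+x_k = y₁+⋯+y_k` in `A^{2k}`. -/
noncomputable def Mcount (k : ℕ) (A : Finset ℤ) : ℕ :=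
  (((Fintype.piFinset fun _ : Fin k => A) ×ˢ (Fintype.piFinset fun _ : Fin k => A)).filter
    (fun p => (∑ i, p.1 i) = ∑ i, p.2 i)).card

open scoped Classical in
/-- `S_k(A)`: solutions with the `x_i` pairwise distinct and the `y_i` pairwise distinct. -/
noncomputable def Scount (k : ℕ) (A : Finset ℤ) : ℕ :=
  (((Fintype.piFinset fun _ : Fin k => A) ×ˢ (Fintype.piFinset fun _ : Fin k => A)).filter
    (fun p => (∑ i, p.1 i) = (∑ i, p.2 i) ∧ Function.Injective p.1 ∧ Function.Injective p.2)).card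

open scoped Classical in
/-- `S_k^*(A₁, A₂)`: solutions with `x ∈ A₁^k`, `y ∈ A₂^k` and all `2k` entries pairwise distinct. -/
noncomputable def Sstar2 (k : ℕ) (A₁ A₂ : Finset ℤ) : ℕ :=
  (((Fintype.piFinset fun _ : Fin k => A₁) ×ˢ (Fintype.piFinset fun _ : Fin k => A₂)).filter
    (fun p => (∑ i, p.1 i) = (∑ i, p.2 i) ∧ Function.Injective p.1 ∧ Function.Injective p.2 ∧
      ∀ i j, p.1 i ≠ p.2 j)).card

/-- `S_k^*(A)`. -/
noncomputable def Sstar (k : ℕ) (A : Finset ℤ) : ℕ := Sstar2 k A A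

/-- `A` is a weak `B_k`-set (`B_k^*`-set): there is no solution of
`x₁+⋯+x_k = y₁+⋯+y_k` with all `2k` elements of `A` pairwise distinct. -/
def IsWeakBkSet (k : ℕ) (A : Finset ℤ) : Prop :=
  ∀ x y : Fin k → ℤ, (∀ i, x i ∈ A) → (∀ i, y i ∈ A) →
    (∑ i, x i) = (∑ i, y i) → Function.Injective x → Function.Injective y →
      ∃ i j, x i = y j

open scoped Classical in
/-- `σ_k(n)`: number of representations of `n` as an ordered sum of `k` elements of `A`. -/
noncomputable def sigmaCount (k : ℕ) (A : Finset ℤ) (n : ℤ) : ℕ :=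
  ((Fintype.piFinset fun _ : Fin k => A).filter (fun x => (∑ i, x i) = n)).card

open scoped Classical in
/-- `s_k(n)`: representations with pairwise distinct summands. -/
noncomputable def sCount (k : ℕ) (A : Finset ℤ) (n : ℤ) : ℕ :=
  ((Fintype.piFinset fun _ : Fin k => A).filter
    (fun x => (∑ i, x i) = n ∧ Function.Injective x)).card


/-!
A tuple `x ∈ A^k` with a repeated entry `x i = x i'` becomes, after deleting `x i`, a tuple
`y ∈ A^(k-1)` with `n = y₁ + ⋯ + y_(k-1) + y_j`. Hence `σ_k(n) - s_k(n) ≤ k · ∑_j r_j(n)`, where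
`r_j(n)` counts these weighted representations, and by Cauchy–Schwarz it suffices to bound
`∑_n r_j(n)²`, the number of solutions of `∑ c_m x_m = ∑ c_m y_m` with `c = 1 + δ_j`, by `M_(k-1)`.
Modulo a large prime `p` such a count equals `p⁻¹ ∑_t ∏_m |F(c_m t)|²` with
`F(t) = ∑_(a ∈ A) e(at/p)`; AM–GM bounds the product by the mean of the `|F(c_m t)|^(2(k-1))`, and
`t ↦ c_m t` permutes `ZMod p`, so the bound is `p⁻¹ ∑_t |F(t)|^(2(k-1)) = M_(k-1)`.
-/

theorem AddChar.map_sum_eq_prod {R M ι : Type*} [AddCommMonoid R] [CommMonoid M]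
    (ψ : AddChar R M) (s : Finset ι) (f : ι → R) : ψ (∑ i ∈ s, f i) = ∏ i ∈ s, ψ (f i) := by
  induction s using Finset.cons_induction with
  | empty => simp
  | cons a s _ ih => rw [sum_cons, prod_cons, AddChar.map_add_eq_mul, ih]

theorem AddChar.sum_piFinset_map_sum {R M ι α : Type*} [AddCommMonoid R] [CommSemiring M]
    [Fintype ι] [DecidableEq ι] (ψ : AddChar R M) (A : ι → Finset α) (g : ι → α → R) :
    ∑ y ∈ Fintype.piFinset A, ψ (∑ m, g m (y m)) = ∏ m, ∑ a ∈ A m, ψ (g m a) := by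
  simp_rw [prod_univ_sum, AddChar.map_sum_eq_prod]

theorem AddChar.card_mul_card_filter_eq_sum_norm_sq {R β : Type*} [CommRing R] [Fintype R]
    [DecidableEq R] {ψ : AddChar R ℂ} (hψ : ψ.IsPrimitive) (s : Finset β) (f : β → R) :
    (Fintype.card R : ℝ) * #{q ∈ s ×ˢ s | f q.1 = f q.2} = ∑ t, ‖∑ b ∈ s, ψ (t * f b)‖ ^ 2 := by
  apply Complex.ofReal_injective
  push_cast
  simp_rw [← Complex.mul_conj', map_sum, ← AddChar.map_neg_eq_conj, sum_mul_sum,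
    ← AddChar.map_add_eq_mul, ← mul_neg, ← mul_add, ← sub_eq_add_neg]
  rw [sum_comm, card_filter, Nat.cast_sum, mul_sum, sum_product]
  refine Finset.sum_congr rfl fun b _ => ?_
  rw [sum_comm]
  refine Finset.sum_congr rfl fun b' _ => ?_
  rw [AddChar.sum_mulShift _ hψ]
  by_cases h : f b = f b' <;> simp [h, sub_eq_zero]

theorem card_mul_prod_le_sum_pow {ι : Type*} (s : Finset ι) {a : ι → ℝ} (ha : ∀ i ∈ s, 0 ≤ a i) :
    #s * ∏ i ∈ s, a i ≤ ∑ i ∈ s, a i ^ #s := by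
  rcases s.eq_empty_or_nonempty with rfl | hs
  · simp
  have hn : (0 : ℝ) < #s := by exact_mod_cast hs.card_pos
  have amgm := Real.geom_mean_le_arith_mean_weighted s (fun _ => (#s : ℝ)⁻¹) (fun i => a i ^ #s)
    (fun _ _ => by positivity) (by simp [hn.ne']) (fun i hi => pow_nonneg (ha i hi) _)
  rw [← mul_sum, prod_congr rfl fun i hi =>
    Real.pow_rpow_inv_natCast (ha i hi) (by simpa using hs.ne_empty)] at amgm
  rwa [le_inv_mul_iff₀ hn] at amgm

theorem sum_prod_mul_le_sum_pow {K ι : Type*} [Field K] [Fintype K] [Fintype ι] [Nonempty ι]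
    {G : K → ℝ} (hG : ∀ t, 0 ≤ G t) {c : ι → K} (hc : ∀ m, c m ≠ 0) :
    ∑ t, ∏ m, G (t * c m) ≤ ∑ t, G t ^ Fintype.card ι := by
  have hn : (0 : ℝ) < Fintype.card ι := by exact_mod_cast Fintype.card_pos
  have hdilate : ∀ m, ∑ t, G (t * c m) ^ Fintype.card ι = ∑ t, G t ^ Fintype.card ι := fun m =>
    Fintype.sum_equiv (Equiv.mulRight₀ (c m) (hc m)) _ _ fun _ => rfl
  refine le_of_mul_le_mul_left ?_ hn
  calc (Fintype.card ι : ℝ) * ∑ t, ∏ m, G (t * c m)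
      ≤ ∑ t, ∑ m, G (t * c m) ^ Fintype.card ι := by
        rw [mul_sum]
        exact sum_le_sum fun t _ => card_mul_prod_le_sum_pow _ fun m _ => hG _
    _ = Fintype.card ι * ∑ t, G t ^ Fintype.card ι := by
        rw [sum_comm, sum_congr rfl fun m _ => hdilate m, sum_const, nsmul_eq_mul, card_univ]

theorem ZMod.card_filter_weightedSum_eq_le {p : ℕ} [Fact p.Prime] {ι : Type*} [Fintype ι]
    [DecidableEq ι] [Nonempty ι] (A : Finset ℤ) {c : ι → ℤ} (hc : ∀ m, (c m : ZMod p) ≠ 0) :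
    #{q ∈ Fintype.piFinset (fun _ : ι => A) ×ˢ Fintype.piFinset (fun _ : ι => A) |
        ((∑ m, c m * q.1 m : ℤ) : ZMod p) = ((∑ m, c m * q.2 m : ℤ) : ZMod p)}
      ≤ #{q ∈ Fintype.piFinset (fun _ : ι => A) ×ˢ Fintype.piFinset (fun _ : ι => A) |
        ((∑ m, q.1 m : ℤ) : ZMod p) = ((∑ m, q.2 m : ℤ) : ZMod p)} := by
  set F : ZMod p → ℂ := fun u => ∑ a ∈ A, ZMod.stdAddChar (u * (a : ZMod p))
  have hcount (c : ι → ℤ) :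
      (p : ℝ) * #{q ∈ Fintype.piFinset (fun _ : ι => A) ×ˢ Fintype.piFinset (fun _ : ι => A) |
        ((∑ m, c m * q.1 m : ℤ) : ZMod p) = ((∑ m, c m * q.2 m : ℤ) : ZMod p)}
        = ∑ t, ∏ m, ‖F (t * c m)‖ ^ 2 := by
    have := AddChar.card_mul_card_filter_eq_sum_norm_sq (ZMod.isPrimitive_stdAddChar p)
      (Fintype.piFinset fun _ : ι => A) fun y => ((∑ m, c m * y m : ℤ) : ZMod p)
    rw [ZMod.card] at this
    rw [this]
    refine Finset.sum_congr rfl fun t _ => ?_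
    rw [prod_pow, ← norm_prod, ← AddChar.sum_piFinset_map_sum]
    push_cast
    simp_rw [mul_sum, mul_assoc]
  have hcount₁ := hcount fun _ => 1
  simp only [one_mul, Int.cast_one, mul_one, prod_const, card_univ] at hcount₁
  have hp : (0 : ℝ) < p := by exact_mod_cast (Fact.out : p.Prime).pos
  refine Nat.cast_le.1 (le_of_mul_le_mul_left ?_ hp)
  rw [hcount c, hcount₁]
  exact sum_prod_mul_le_sum_pow (G := fun u => ‖F u‖ ^ 2) (fun _ => by positivity) hc

theorem exists_prime_eq_zero_of_intCast_eq_zero (D : Finset ℤ) :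
    ∃ p, p.Prime ∧ ∀ d ∈ D, (d : ZMod p) = 0 → d = 0 := by
  obtain ⟨p, hle, hp⟩ := Nat.exists_infinite_primes (D.sup Int.natAbs + 1)
  refine ⟨p, hp, fun d hd hdp => Int.natAbs_eq_zero.1 (Nat.eq_zero_of_dvd_of_lt
    (Int.natAbs_dvd_natAbs.2 ((ZMod.intCast_zmod_eq_zero_iff_dvd d p).1 hdp)) ?_)⟩
  exact (Nat.lt_succ_of_le (le_sup (f := Int.natAbs) hd)).trans_le hle

theorem card_filter_weightedSum_eq_le {ι : Type*} [Fintype ι] [DecidableEq ι] [Nonempty ι]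
    (A : Finset ℤ) {c : ι → ℤ} (hc : ∀ m, c m ≠ 0) :
    #{q ∈ Fintype.piFinset (fun _ : ι => A) ×ˢ Fintype.piFinset (fun _ : ι => A) |
        ∑ m, c m * q.1 m = ∑ m, c m * q.2 m}
      ≤ #{q ∈ Fintype.piFinset (fun _ : ι => A) ×ˢ Fintype.piFinset (fun _ : ι => A) |
        ∑ m, q.1 m = ∑ m, q.2 m} := by
  set P := Fintype.piFinset (fun _ : ι => A) ×ˢ Fintype.piFinset (fun _ : ι => A)
  set D := univ.image c ∪ P.image (fun q => ∑ m, c m * q.1 m - ∑ m, c m * q.2 m) ∪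
    P.image (fun q => ∑ m, q.1 m - ∑ m, q.2 m)
  obtain ⟨p, hp, hD⟩ := exists_prime_eq_zero_of_intCast_eq_zero D
  have : Fact p.Prime := ⟨hp⟩
  have hcast {x y : ℤ} (hxy : x - y ∈ D) : (x : ZMod p) = y ↔ x = y :=
    ⟨fun h => sub_eq_zero.1 (hD _ hxy (by rw [Int.cast_sub, h, sub_self])), congrArg _⟩
  calc #{q ∈ P | ∑ m, c m * q.1 m = ∑ m, c m * q.2 m}
      = #{q ∈ P | ((∑ m, c m * q.1 m : ℤ) : ZMod p) = ((∑ m, c m * q.2 m : ℤ) : ZMod p)} := by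
        refine congrArg card (filter_congr fun q hq => (hcast ?_).symm)
        exact mem_union_left _ (mem_union_right _ (mem_image_of_mem _ hq))
    _ ≤ #{q ∈ P | ((∑ m, q.1 m : ℤ) : ZMod p) = ((∑ m, q.2 m : ℤ) : ZMod p)} :=
        ZMod.card_filter_weightedSum_eq_le A fun m hm =>
          hc m (hD _ (mem_union_left _ (mem_union_left _ (mem_image_of_mem _ (mem_univ m)))) hm)
    _ = #{q ∈ P | ∑ m, q.1 m = ∑ m, q.2 m} :=
        congrArg card (filter_congr fun q hq => hcast (mem_union_right _ (mem_image_of_mem _ hq)))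

theorem card_filter_sum_eq_apply_eq_succAbove_le {k : ℕ} (A : Finset ℤ) (n : ℤ) (i : Fin (k + 1))
    (j : Fin k) :
    #{x ∈ Fintype.piFinset (fun _ => A) | ∑ l, x l = n ∧ x i = x (i.succAbove j)}
      ≤ #{y ∈ Fintype.piFinset (fun _ : Fin k => A) | ∑ m, y m + y j = n} := by
  refine card_le_card_of_injOn i.removeNth (fun x hx => ?_) fun x hx x' hx' h => ?_
  · simp only [mem_coe, mem_filter, Fintype.mem_piFinset] at hx ⊢
    obtain ⟨hA, hsum, hij⟩ := hx
    refine ⟨fun m => hA _, ?_⟩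
    rw [← hsum, Fin.sum_univ_succAbove x i, hij, add_comm]
    rfl
  · simp only [mem_coe, mem_filter] at hx hx'
    rw [← Fin.insertNth_self_removeNth i x, ← Fin.insertNth_self_removeNth i x', hx.2.2, hx'.2.2]
    exact congrArg₂ _ (congrFun h j) h

theorem card_filter_sum_eq_not_injective_le {k : ℕ} (A : Finset ℤ) (n : ℤ) :
    #{x ∈ Fintype.piFinset (fun _ : Fin (k + 1) => A) | ∑ l, x l = n ∧ ¬ Function.Injective x}
      ≤ (k + 1) * ∑ j, #{y ∈ Fintype.piFinset (fun _ : Fin k => A) | ∑ m, y m + y j = n} := by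
  set Q := Fintype.piFinset (fun _ : Fin (k + 1) => A)
  have hcover : {x ∈ Q | ∑ l, x l = n ∧ ¬ Function.Injective x} ⊆
      univ.biUnion fun q : Fin (k + 1) × Fin k =>
        {x ∈ Q | ∑ l, x l = n ∧ x q.1 = x (q.1.succAbove q.2)} := by
    intro x hx
    obtain ⟨hxQ, hsum, hx⟩ := mem_filter.1 hx
    obtain ⟨i, i', hxi, hii'⟩ := Function.not_injective_iff.1 hx
    obtain ⟨j, rfl⟩ := Fin.exists_succAbove_eq hii'.symm
    exact mem_biUnion.2 ⟨(i, j), mem_univ _, mem_filter.2 ⟨hxQ, hsum, hxi⟩⟩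
  calc _ ≤ ∑ q : Fin (k + 1) × Fin k, #{x ∈ Q | ∑ l, x l = n ∧ x q.1 = x (q.1.succAbove q.2)} :=
        (card_le_card hcover).trans card_biUnion_le
    _ ≤ ∑ q : Fin (k + 1) × Fin k,
          #{y ∈ Fintype.piFinset (fun _ : Fin k => A) | ∑ m, y m + y q.2 = n} :=
        sum_le_sum fun q _ => card_filter_sum_eq_apply_eq_succAbove_le A n q.1 q.2
    _ = _ := by simp [Fintype.sum_prod_type]

theorem sum_sq_card_filter_le {α β : Type*} [DecidableEq α] (s : Finset β) (f : β → α)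
    (S : Finset α) : ∑ n ∈ S, #{b ∈ s | f b = n} ^ 2 ≤ #{q ∈ s ×ˢ s | f q.1 = f q.2} := by
  calc ∑ n ∈ S, #{b ∈ s | f b = n} ^ 2
      = ∑ n ∈ S, #{q ∈ {q ∈ s ×ˢ s | f q.1 = f q.2 ∧ f q.1 ∈ S} | f q.1 = n} := by
        refine sum_congr rfl fun n hn => ?_
        rw [sq, ← card_product, filter_filter]
        congr 1
        ext q
        simp only [mem_product, mem_filter]
        constructor
        · rintro ⟨⟨h1, rfl⟩, h2, h3⟩
          exact ⟨⟨h1, h2⟩, ⟨h3.symm, hn⟩, rfl⟩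
        · rintro ⟨⟨h1, h2⟩, ⟨h3, -⟩, rfl⟩
          exact ⟨⟨h1, rfl⟩, h2, h3.symm⟩
    _ = #{q ∈ s ×ˢ s | f q.1 = f q.2 ∧ f q.1 ∈ S} :=
        (card_eq_sum_card_fiberwise fun q hq => (mem_filter.1 hq).2.2).symm
    _ ≤ #{q ∈ s ×ˢ s | f q.1 = f q.2} := card_le_card (monotone_filter_right _ fun _ _ => And.left)

theorem card_filter_sum_add_apply_eq_le_mcount {k : ℕ} (A : Finset ℤ) (j : Fin k) :
    #{q ∈ Fintype.piFinset (fun _ : Fin k => A) ×ˢ Fintype.piFinset (fun _ : Fin k => A) |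
        ∑ m, q.1 m + q.1 j = ∑ m, q.2 m + q.2 j} ≤ Mcount k A := by
  have : Nonempty (Fin k) := ⟨j⟩
  have hw (y : Fin k → ℤ) : ∑ m, (1 + Pi.single j 1 : Fin k → ℤ) m * y m = ∑ m, y m + y j := by
    simp [add_mul, sum_add_distrib, Pi.single_apply]
  have hc (m : Fin k) : (1 + Pi.single j 1 : Fin k → ℤ) m ≠ 0 := by
    rcases eq_or_ne m j with rfl | h <;> simp [*]
  convert card_filter_weightedSum_eq_le A hc using 2
  · simp only [hw]
  · rw [Mcount]

theorem sigmaCount_eq_sCount_add (k : ℕ) (A : Finset ℤ) (n : ℤ) :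
    sigmaCount k A n = sCount k A n +
      #{x ∈ Fintype.piFinset (fun _ : Fin k => A) | ∑ i, x i = n ∧ ¬ Function.Injective x} := by
  classical
  rw [sigmaCount, sCount, ← filter_filter, ← filter_filter]
  exact (card_filter_add_card_filter_not _).symm

theorem sq_card_filter_sum_eq_not_injective_le {k : ℕ} (A : Finset ℤ) (n : ℤ) :
    #{x ∈ Fintype.piFinset (fun _ : Fin (k + 1) => A) | ∑ l, x l = n ∧ ¬ Function.Injective x} ^ 2
      ≤ (k + 1) ^ 2 * k *
        ∑ j, #{y ∈ Fintype.piFinset (fun _ : Fin k => A) | ∑ m, y m + y j = n} ^ 2 := by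
  calc _ ≤ ((k + 1) * ∑ j, #{y ∈ Fintype.piFinset (fun _ : Fin k => A) | ∑ m, y m + y j = n}) ^ 2 :=
        Nat.pow_le_pow_left (card_filter_sum_eq_not_injective_le A n) 2
    _ ≤ _ := by
        rw [mul_pow, mul_assoc]
        gcongr
        simpa using sq_sum_le_card_mul_sum_sq (s := univ)
          (f := fun j => #{y ∈ Fintype.piFinset (fun _ : Fin k => A) | ∑ m, y m + y j = n})

theorem ruzsa_5_8 (k : ℕ) (hk : 2 ≤ k) (A : Finset ℤ) :
    (∑ n ∈ (Fintype.piFinset fun _ : Fin k => A).image (fun x => ∑ i, x i),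
        ((sigmaCount k A n : ℤ) - (sCount k A n : ℤ)) ^ 2)
      ≤ (k : ℤ) ^ 4 * (Mcount (k - 1) A : ℤ) := by
  obtain ⟨K, rfl⟩ : ∃ K, k = K + 2 := ⟨k - 2, by omega⟩
  set S := (Fintype.piFinset fun _ : Fin (K + 2) => A).image (fun x => ∑ i, x i)
  set r : Fin (K + 1) → ℤ → ℕ := fun j n =>
    #{y ∈ Fintype.piFinset (fun _ : Fin (K + 1) => A) | ∑ m, y m + y j = n}
  have hr (j : Fin (K + 1)) : ∑ n ∈ S, r j n ^ 2 ≤ Mcount (K + 1) A :=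
    (sum_sq_card_filter_le _ _ S).trans (card_filter_sum_add_apply_eq_le_mcount A j)
  simp only [sigmaCount_eq_sCount_add, Nat.cast_add, add_sub_cancel_left]
  exact_mod_cast calc
    _ ≤ ∑ n ∈ S, (K + 2) ^ 2 * (K + 1) * ∑ j, r j n ^ 2 :=
        sum_le_sum fun n _ => sq_card_filter_sum_eq_not_injective_le A n
    _ = (K + 2) ^ 2 * (K + 1) * ∑ j, ∑ n ∈ S, r j n ^ 2 := by rw [← mul_sum, sum_comm]
    _ ≤ (K + 2) ^ 2 * (K + 1) * ((K + 1) * Mcount (K + 1) A) := by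
        gcongr
        simpa using sum_le_sum (s := univ) fun j _ => hr j
    _ ≤ (K + 2) ^ 4 * Mcount (K + 1) A := by
        rw [← mul_assoc]
        exact Nat.mul_le_mul_right _ (by ring_nf; nlinarith)
end

section
/- If A is a weak B_k-set (B_k*-set), then S_k ≤ k^2 · |A| · S_{k-1}, where S_j counts solutions to x_1+...+x_j = y_1+...+y_j in A^{2j} with the x_i pairwise distinct and the y_i pairwise distinct. -/
open Finset

/-!
In a `B_k^*`-set every solution counted by `S_k` has a coincidence `x i = y j`. Deleting both
entries leaves a solution counted by `S_{k-1}`, and the original solution is recovered from it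
together with `(i, j)` and the common value `x i ∈ A`.
-/

open scoped Classical in
noncomputable def distinctSolutions (k : ℕ) (A : Finset ℤ) :
    Finset ((Fin k → ℤ) × (Fin k → ℤ)) :=
  ((Fintype.piFinset fun _ : Fin k => A) ×ˢ (Fintype.piFinset fun _ : Fin k => A)).filter
    (fun p => (∑ i, p.1 i) = (∑ i, p.2 i) ∧ Function.Injective p.1 ∧ Function.Injective p.2)

lemma Scount_eq_card_distinctSolutions (k : ℕ) (A : Finset ℤ) :
    Scount k A = #(distinctSolutions k A) := rfl

lemma mem_distinctSolutions {k : ℕ} {A : Finset ℤ} {p : (Fin k → ℤ) × (Fin k → ℤ)} :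
    p ∈ distinctSolutions k A ↔ ((∀ i, p.1 i ∈ A) ∧ ∀ i, p.2 i ∈ A) ∧
      (∑ i, p.1 i) = (∑ i, p.2 i) ∧ Function.Injective p.1 ∧ Function.Injective p.2 := by
  simp only [distinctSolutions, mem_filter, mem_product, Fintype.mem_piFinset]

lemma Fin.sum_removeNth_eq_of_sum_eq {M : Type*} [AddCancelCommMonoid M] {n : ℕ}
    {x y : Fin (n + 1) → M} {i j : Fin (n + 1)} (hsum : ∑ l, x l = ∑ l, y l) (hij : x i = y j) :
    ∑ l, i.removeNth x l = ∑ l, j.removeNth y l := by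
  rw [← Fin.add_sum_removeNth i x, ← Fin.add_sum_removeNth j y, hij] at hsum
  exact add_left_cancel hsum

lemma removeNth_mem_distinctSolutions {m : ℕ} {A : Finset ℤ}
    {p : (Fin (m + 1) → ℤ) × (Fin (m + 1) → ℤ)} (hp : p ∈ distinctSolutions (m + 1) A)
    {i j : Fin (m + 1)} (hij : p.1 i = p.2 j) :
    (i.removeNth p.1, j.removeNth p.2) ∈ distinctSolutions m A := by
  obtain ⟨⟨hx, hy⟩, hsum, hxinj, hyinj⟩ := mem_distinctSolutions.1 hp
  exact mem_distinctSolutions.2 ⟨⟨fun _ => hx _, fun _ => hy _⟩,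
    Fin.sum_removeNth_eq_of_sum_eq hsum hij,
    hxinj.comp Fin.succAbove_right_injective, hyinj.comp Fin.succAbove_right_injective⟩

lemma card_filter_apply_eq_le {m : ℕ} (A : Finset ℤ) (i j : Fin (m + 1)) :
    #{p ∈ distinctSolutions (m + 1) A | p.1 i = p.2 j} ≤ #A * #(distinctSolutions m A) := by
  rw [← card_product]
  refine card_le_card_of_injOn (fun p => (p.1 i, i.removeNth p.1, j.removeNth p.2)) ?_ ?_
  · intro p hp
    obtain ⟨hp, hij⟩ := mem_filter.1 hp
    exact mem_product.2
      ⟨(mem_distinctSolutions.1 hp).1.1 i, removeNth_mem_distinctSolutions hp hij⟩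
  · intro p hp q hq hpq
    obtain ⟨hpij, hqij⟩ := (mem_filter.1 hp).2, (mem_filter.1 hq).2
    simp only [Prod.mk.injEq] at hpq
    obtain ⟨hi, hx, hy⟩ := hpq
    refine Prod.ext ?_ ?_
    · rw [← i.insertNth_self_removeNth p.1, ← i.insertNth_self_removeNth q.1, hi, hx]
    · rw [← j.insertNth_self_removeNth p.2, ← j.insertNth_self_removeNth q.2, ← hpij, ← hqij,
        hi, hy]

lemma distinctSolutions_subset_biUnion {k : ℕ} {A : Finset ℤ} (hA : IsWeakBkSet k A) :
    distinctSolutions k A ⊆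
      (univ : Finset (Fin k × Fin k)).biUnion
        fun ij => {p ∈ distinctSolutions k A | p.1 ij.1 = p.2 ij.2} := by
  intro p hp
  obtain ⟨⟨hx, hy⟩, hsum, hxinj, hyinj⟩ := mem_distinctSolutions.1 hp
  obtain ⟨i, j, hij⟩ := hA p.1 p.2 hx hy hsum hxinj hyinj
  exact mem_biUnion.2 ⟨(i, j), mem_univ _, mem_filter.2 ⟨hp, hij⟩⟩

theorem Sk_le_Skm1 (k : ℕ) (hk : 1 ≤ k) (A : Finset ℤ) (hA : IsWeakBkSet k A) :
    Scount k A ≤ k ^ 2 * A.card * Scount (k - 1) A := by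
  obtain ⟨m, rfl⟩ : ∃ m, k = m + 1 := ⟨k - 1, by omega⟩
  rw [Scount_eq_card_distinctSolutions, Scount_eq_card_distinctSolutions, Nat.add_sub_cancel]
  calc #(distinctSolutions (m + 1) A)
      ≤ ∑ ij : Fin (m + 1) × Fin (m + 1),
          #{p ∈ distinctSolutions (m + 1) A | p.1 ij.1 = p.2 ij.2} :=
        (card_le_card (distinctSolutions_subset_biUnion hA)).trans card_biUnion_le
    _ ≤ ∑ _ij : Fin (m + 1) × Fin (m + 1), #A * #(distinctSolutions m A) :=
        sum_le_sum fun ij _ => card_filter_apply_eq_le A ij.1 ij.2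
    _ = (m + 1) ^ 2 * #A * #(distinctSolutions m A) := by
        simp only [sum_const, card_univ, Fintype.card_prod, Fintype.card_fin, smul_eq_mul]
        ring
end

section
/- Let A be a finite set of integers. Then there exists a subset A' ⊆ A such that S_k*(A) ≤ 4^k · S_k*(A', A\A'), where S_k*(A) counts solutions to x_1+...+x_k = y_1+...+y_k in A^{2k} with all 2k coordinates pairwise distinct, and S_k*(A_1, A_2) counts such solutions with x_i ∈ A_1 and y_i ∈ A_2. -/
open Finset

theorem random_split (k : ℕ) (A : Finset ℤ) :
    ∃ A' : Finset ℤ, A' ⊆ A ∧ Sstar k A ≤ 4 ^ k * Sstar2 k A' (A \ A') := by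
  classical
  set T : Finset ((Fin k → ℤ) × (Fin k → ℤ)) :=
    ((Fintype.piFinset fun _ : Fin k => A) ×ˢ (Fintype.piFinset fun _ : Fin k => A)).filter
      (fun p => (∑ i, p.1 i) = (∑ i, p.2 i) ∧ Function.Injective p.1 ∧ Function.Injective p.2 ∧
        ∀ i j, p.1 i ≠ p.2 j) with hTdef
  have hS : Sstar k A = T.card := by
    rw [Sstar, Sstar2, hTdef]
  -- the condition that a solution p is split by A'
  set cond : ((Fin k → ℤ) × (Fin k → ℤ)) → Finset ℤ → Prop :=
    fun p A' => (∀ i, p.1 i ∈ A') ∧ ∀ j, p.2 j ∉ A' with hcond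
  -- per-solution lower bound on the number of splitting subsets
  have key : ∀ p ∈ T, 2 ^ A.card ≤ 4 ^ k *
      (A.powerset.filter (fun A' => cond p A')).card := by
    intro p hp
    rw [hTdef, mem_filter, mem_product, Fintype.mem_piFinset, Fintype.mem_piFinset] at hp
    obtain ⟨⟨hx, hy⟩, hsum, hxinj, hyinj, hxy⟩ := hp
    set X := Finset.image p.1 Finset.univ with hX
    set Y := Finset.image p.2 Finset.univ with hY
    have hXA : X ⊆ A := by
      intro a ha
      simp only [hX, mem_image, mem_univ, true_and] at ha
      obtain ⟨i, rfl⟩ := ha; exact hx i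
    have hYA : Y ⊆ A := by
      intro a ha
      simp only [hY, mem_image, mem_univ, true_and] at ha
      obtain ⟨i, rfl⟩ := ha; exact hy i
    have hXc : X.card = k := by
      rw [hX, Finset.card_image_of_injective _ hxinj, card_univ, Fintype.card_fin]
    have hYc : Y.card = k := by
      rw [hY, Finset.card_image_of_injective _ hyinj, card_univ, Fintype.card_fin]
    -- injection from subsets of A \ (X ∪ Y) into splitting subsets
    have hmaps : ∀ S ∈ (A \ (X ∪ Y)).powerset,
        S ∪ X ∈ A.powerset.filter (fun A' => cond p A') := by
      intro S hS'
      rw [mem_powerset] at hS'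
      rw [mem_filter, mem_powerset]
      refine ⟨union_subset (hS'.trans (sdiff_subset)) hXA, ?_, ?_⟩
      · intro i
        exact mem_union_right _ (by simp [hX])
      · intro j hj
        rcases mem_union.1 hj with h | h
        · have := hS' h
          rw [mem_sdiff] at this
          exact this.2 (mem_union_right _ (by simp [hY]))
        · simp only [hX, mem_image, mem_univ, true_and] at h
          obtain ⟨i, hi⟩ := h
          exact hxy i j hi
    have hinjOn : Set.InjOn (fun S => S ∪ X) ((A \ (X ∪ Y)).powerset : Set (Finset ℤ)) := by
      intro S1 h1 S2 h2 he
      simp only [Finset.coe_powerset, Set.mem_preimage, Set.mem_powerset_iff,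
        Finset.coe_subset, mem_coe, Finset.mem_powerset] at h1 h2
      have d1 : Disjoint S1 X := by
        refine Finset.disjoint_left.2 fun a ha hax => ?_
        have := h1 ha; rw [mem_sdiff] at this; exact this.2 (mem_union_left _ hax)
      have d2 : Disjoint S2 X := by
        refine Finset.disjoint_left.2 fun a ha hax => ?_
        have := h2 ha; rw [mem_sdiff] at this; exact this.2 (mem_union_left _ hax)
      have : (S1 ∪ X) \ X = (S2 ∪ X) \ X := congrArg (· \ X) he
      rwa [Finset.union_sdiff_cancel_right d1, Finset.union_sdiff_cancel_right d2] at this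
    have hcard := Finset.card_le_card_of_injOn _ hmaps hinjOn
    rw [Finset.card_powerset] at hcard
    have hsd : A.card - 2 * k ≤ (A \ (X ∪ Y)).card := by
      have h1 : (X ∪ Y).card ≤ 2 * k := by
        have := Finset.card_union_le X Y
        omega
      have h2 : A.card - (X ∪ Y).card ≤ (A \ (X ∪ Y)).card := Finset.le_card_sdiff _ _
      omega
    calc 2 ^ A.card ≤ 2 ^ (2 * k + (A.card - 2 * k)) := by
          apply Nat.pow_le_pow_right (by norm_num); omega
      _ = 4 ^ k * 2 ^ (A.card - 2 * k) := by
          rw [pow_add]; congr 1; rw [show (4 : ℕ) = 2 ^ 2 by norm_num, ← pow_mul]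
      _ ≤ 4 ^ k * 2 ^ ((A \ (X ∪ Y)).card) := by
          gcongr <;> norm_num
      _ ≤ 4 ^ k * (A.powerset.filter (fun A' => cond p A')).card := by gcongr
  -- sum over solutions, then swap the order of summation
  have step1 : 2 ^ A.card * T.card ≤
      4 ^ k * ∑ A' ∈ A.powerset, (T.filter (fun p => cond p A')).card := by
    have hswap : ∑ p ∈ T, (A.powerset.filter (fun A' => cond p A')).card
        = ∑ A' ∈ A.powerset, (T.filter (fun p => cond p A')).card := by
      simp_rw [Finset.card_filter]
      exact Finset.sum_comm
    calc 2 ^ A.card * T.card = ∑ _p ∈ T, 2 ^ A.card := by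
          rw [Finset.sum_const, smul_eq_mul, mul_comm]
      _ ≤ ∑ p ∈ T, 4 ^ k * (A.powerset.filter (fun A' => cond p A')).card :=
          Finset.sum_le_sum key
      _ = 4 ^ k * ∑ p ∈ T, (A.powerset.filter (fun A' => cond p A')).card := by
          rw [Finset.mul_sum]
      _ = _ := by rw [hswap]
  -- each split solution is counted by Sstar2
  have step2 : ∀ A' ∈ A.powerset,
      (T.filter (fun p => cond p A')).card ≤ Sstar2 k A' (A \ A') := by
    intro A' _
    rw [Sstar2]
    apply Finset.card_le_card
    intro p hp
    rw [mem_filter] at hp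
    obtain ⟨hpT, hc1, hc2⟩ := hp
    rw [hTdef, mem_filter, mem_product, Fintype.mem_piFinset, Fintype.mem_piFinset] at hpT
    obtain ⟨⟨hx, hy⟩, hrest⟩ := hpT
    rw [mem_filter, mem_product, Fintype.mem_piFinset, Fintype.mem_piFinset]
    exact ⟨⟨fun i => hc1 i, fun j => mem_sdiff.2 ⟨hy j, hc2 j⟩⟩, hrest⟩
  -- conclude by averaging
  have hfinal : ∑ _A' ∈ A.powerset, Sstar k A ≤
      ∑ A' ∈ A.powerset, 4 ^ k * Sstar2 k A' (A \ A') := by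
    rw [Finset.sum_const, smul_eq_mul, Finset.card_powerset, hS]
    calc 2 ^ A.card * T.card
        ≤ 4 ^ k * ∑ A' ∈ A.powerset, (T.filter (fun p => cond p A')).card := step1
      _ ≤ 4 ^ k * ∑ A' ∈ A.powerset, Sstar2 k A' (A \ A') := by
          gcongr with A' hA'; exact step2 A' hA'
      _ = ∑ A' ∈ A.powerset, 4 ^ k * Sstar2 k A' (A \ A') := by rw [Finset.mul_sum]
  obtain ⟨A', hA', hle⟩ := Finset.exists_le_of_sum_le
    (⟨∅, Finset.empty_mem_powerset A⟩ : A.powerset.Nonempty) hfinal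
  exact ⟨A', Finset.mem_powerset.1 hA', hle⟩
end

section
/- Let A be a B_k*-set. Then there is a set B ⊆ A with |B| ≥ |A| − 2k^3 such that, setting 𝒳 = {j ∈ [k] : B is not a B_j*-set} and 𝒢 = [k]\𝒳, for every l ≥ 1 the l-fold sumset l𝒳 is disjoint from 𝒢. -/
open Finset

lemma weak_mono {j : ℕ} {B B' : Finset ℤ} (h : B' ⊆ B) (hB : IsWeakBkSet j B) :
    IsWeakBkSet j B' := fun x y hx hy hs ix iy =>
  hB x y (fun i => h (hx i)) (fun i => h (hy i)) hs ix iy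

lemma addCases_inj {α : Type*} {m n : ℕ} {f : Fin m → α} {g : Fin n → α}
    (hf : Function.Injective f) (hg : Function.Injective g)
    (hfg : ∀ i j, f i ≠ g j) :
    Function.Injective (Fin.addCases f g : Fin (m + n) → α) := by
  intro a b hab
  induction a using Fin.addCases with
  | left i =>
    induction b using Fin.addCases with
    | left i' => simp only [Fin.addCases_left] at hab; exact congrArg _ (hf hab)
    | right i' => simp only [Fin.addCases_left, Fin.addCases_right] at hab
                  exact absurd hab (hfg i i')
  | right i =>
    induction b using Fin.addCases with
    | left i' => simp only [Fin.addCases_left, Fin.addCases_right] at hab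
                 exact absurd hab.symm (hfg i' i)
    | right i' => simp only [Fin.addCases_right] at hab; exact congrArg _ (hg hab)

/-- combining two disjoint witnesses -/
lemma combineWit {j j' : ℕ} {B : Finset ℤ} {x y : Fin j → ℤ}
    (hx : ∀ i, x i ∈ B) (hy : ∀ i, y i ∈ B) (hs : (∑ i, x i) = ∑ i, y i)
    (hxi : Function.Injective x) (hyi : Function.Injective y)
    (hxy : ∀ i i', x i ≠ y i')
    (h2 : ¬ IsWeakBkSet j' (B \ (Finset.univ.image x ∪ Finset.univ.image y))) :
    ¬ IsWeakBkSet (j + j') B := by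
  classical
  simp only [IsWeakBkSet, not_forall] at h2 ⊢
  obtain ⟨x₂, y₂, hx₂, hy₂, hs₂, hx₂i, hy₂i, hne₂⟩ := h2
  set W : Finset ℤ := Finset.univ.image x ∪ Finset.univ.image y with hW
  have hx₂B : ∀ i, x₂ i ∈ B := fun i => (Finset.mem_sdiff.1 (hx₂ i)).1
  have hy₂B : ∀ i, y₂ i ∈ B := fun i => (Finset.mem_sdiff.1 (hy₂ i)).1
  have hx₂W : ∀ i, x₂ i ∉ W := fun i => (Finset.mem_sdiff.1 (hx₂ i)).2
  have hy₂W : ∀ i, y₂ i ∉ W := fun i => (Finset.mem_sdiff.1 (hy₂ i)).2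
  have hxW : ∀ i, x i ∈ W := fun i => Finset.mem_union_left _ (Finset.mem_image_of_mem _ (Finset.mem_univ i))
  have hyW : ∀ i, y i ∈ W := fun i => Finset.mem_union_right _ (Finset.mem_image_of_mem _ (Finset.mem_univ i))
  have hne₂' : ∀ a b, x₂ a ≠ y₂ b := fun a b h => hne₂ ⟨a, b, h⟩
  refine ⟨Fin.addCases x x₂, Fin.addCases y y₂, ?_, ?_, ?_, ?_, ?_, ?_⟩
  · intro i; induction i using Fin.addCases with
    | left i => simpa using hx i
    | right i => simpa using hx₂B i
  · intro i; induction i using Fin.addCases with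
    | left i => simpa using hy i
    | right i => simpa using hy₂B i
  · rw [Fin.sum_univ_add, Fin.sum_univ_add]
    simp only [Fin.addCases_left, Fin.addCases_right]
    rw [hs, hs₂]
  · exact addCases_inj hxi hx₂i (fun a b h => hx₂W b (h ▸ hxW a))
  · exact addCases_inj hyi hy₂i (fun a b h => hy₂W b (h ▸ hyW a))
  · rintro ⟨a, b, hab⟩
    induction a using Fin.addCases with
    | left a =>
      induction b using Fin.addCases with
      | left b => simp only [Fin.addCases_left] at hab; exact hxy a b hab
      | right b => simp only [Fin.addCases_left, Fin.addCases_right] at hab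
                   exact hy₂W b (hab ▸ hxW a)
    | right a =>
      induction b using Fin.addCases with
      | left b => simp only [Fin.addCases_left, Fin.addCases_right] at hab
                  exact hx₂W a (hab.symm ▸ hyW b)
      | right b => simp only [Fin.addCases_right] at hab; exact hne₂' a b hab

open scoped Classical in
noncomputable def XsetB (k : ℕ) (B : Finset ℤ) : Finset ℕ :=
  (Finset.Icc 1 k).filter (fun j => ¬ IsWeakBkSet j B)

lemma XsetB_mono {k : ℕ} {B B' : Finset ℤ} (h : B' ⊆ B) : XsetB k B' ⊆ XsetB k B := by
  classical
  intro j hj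
  rw [XsetB, Finset.mem_filter] at hj ⊢
  exact ⟨hj.1, fun hw => hj.2 (weak_mono h hw)⟩

lemma deletionB (k : ℕ) : ∀ n : ℕ, ∀ B : Finset ℤ, (XsetB k B).card ≤ n →
    ∃ B' : Finset ℤ, B' ⊆ B ∧ (B.card : ℤ) - 2 * k * n ≤ (B'.card : ℤ) ∧
      ∀ j j', j ∈ XsetB k B' → j' ∈ XsetB k B' → j + j' ≤ k → j + j' ∈ XsetB k B' := by
  classical
  intro n
  induction n with
  | zero =>
    intro B hB
    have hempty : XsetB k B = ∅ := Finset.card_eq_zero.1 (Nat.le_zero.1 hB)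
    refine ⟨B, Finset.Subset.refl B, by push_cast; linarith, fun j j' hj _ _ => ?_⟩
    rw [hempty] at hj
    simp at hj
  | succ n ih =>
    intro B hB
    by_cases hc : ∀ j j', j ∈ XsetB k B → j' ∈ XsetB k B → j + j' ≤ k → j + j' ∈ XsetB k B
    · refine ⟨B, Finset.Subset.refl B, ?_, hc⟩
      have h0 : (0:ℤ) ≤ 2 * (k:ℤ) * ((n:ℤ)+1) := by positivity
      push_cast
      linarith
    · push_neg at hc
      obtain ⟨j, j', hj, hj', hle, hnot⟩ := hc
      rw [XsetB, Finset.mem_filter] at hj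
      have hjk : 1 ≤ j ∧ j ≤ k := by
        have := hj.1; rw [Finset.mem_Icc] at this; exact this
      obtain ⟨xw, yw, hx, hy, hs, hxi, hyi, hne⟩ : ∃ x y : Fin j → ℤ,
          (∀ i, x i ∈ B) ∧ (∀ i, y i ∈ B) ∧ (∑ i, x i) = (∑ i, y i) ∧
          Function.Injective x ∧ Function.Injective y ∧ ∀ i i', x i ≠ y i' := by
        have := hj.2
        rw [IsWeakBkSet] at this
        push_neg at this
        obtain ⟨x, y, h1, h2, h3, h4, h5, h6⟩ := this
        exact ⟨x, y, h1, h2, h3, h4, h5, fun a b hab => h6 a b hab⟩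
      set W : Finset ℤ := Finset.univ.image xw ∪ Finset.univ.image yw with hWdef
      have hWcard : W.card ≤ 2 * k := by
        calc W.card ≤ (Finset.univ.image xw).card + (Finset.univ.image yw).card :=
              Finset.card_union_le _ _
          _ ≤ j + j := by
              gcongr <;> exact (Finset.card_image_le).trans (by simp)
          _ ≤ 2 * k := by omega
      -- j' is no longer bad in B \ W
      have hj'not : j' ∉ XsetB k (B \ W) := by
        intro hmem
        rw [XsetB, Finset.mem_filter] at hmem
        have : ¬ IsWeakBkSet (j + j') B := combineWit hx hy hs hxi hyi hne hmem.2
        apply hnot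
        rw [XsetB, Finset.mem_filter, Finset.mem_Icc]
        have hj'k : 1 ≤ j' := by
          have := hj'; rw [XsetB, Finset.mem_filter, Finset.mem_Icc] at this; omega
        exact ⟨⟨by omega, hle⟩, this⟩
      have hsub : XsetB k (B \ W) ⊆ XsetB k B \ {j'} := by
        intro a ha
        rw [Finset.mem_sdiff, Finset.mem_singleton]
        exact ⟨XsetB_mono (Finset.sdiff_subset) ha, fun h => hj'not (h ▸ ha)⟩
      have hcard : (XsetB k (B \ W)).card ≤ n := by
        have h1 : (XsetB k B \ {j'}).card = (XsetB k B).card - 1 := by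
          rw [Finset.sdiff_singleton_eq_erase, Finset.card_erase_of_mem hj']
        have h2 := Finset.card_le_card hsub
        have h3 : 1 ≤ (XsetB k B).card := Finset.card_pos.2 ⟨j', hj'⟩
        omega
      obtain ⟨B', hB'sub, hB'card, hB'closed⟩ := ih (B \ W) hcard
      refine ⟨B', hB'sub.trans Finset.sdiff_subset, ?_, hB'closed⟩
      have h4 : B.card - W.card ≤ (B \ W).card := Finset.le_card_sdiff _ _
      have h5 : W.card ≤ B.card ∨ True := Or.inr trivial
      push_cast at hB'card ⊢
      have : ((B \ W).card : ℤ) ≥ (B.card : ℤ) - 2 * k := by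
        have := h4
        have := hWcard
        omega
      linarith

lemma sumMem {k : ℕ} {B : Finset ℤ}
    (hc : ∀ j j', j ∈ XsetB k B → j' ∈ XsetB k B → j + j' ≤ k → j + j' ∈ XsetB k B) :
    ∀ l : ℕ, ∀ f : Fin (l+1) → ℕ, (∀ i, f i ∈ XsetB k B) → (∑ i, f i) ≤ k →
      (∑ i, f i) ∈ XsetB k B := by
  intro l
  induction l with
  | zero => intro f hf _; simpa using hf 0
  | succ m ih =>
    intro f hf hsum
    rw [Fin.sum_univ_castSucc] at hsum ⊢
    refine hc _ _ (ih _ (fun i => hf _) (by omega)) (hf _) hsum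

open scoped Classical in
theorem structural_lemma (k : ℕ) (hk : 1 ≤ k) (A : Finset ℤ) (hA : IsWeakBkSet k A) :
    ∃ B : Finset ℤ, B ⊆ A ∧ (A.card : ℤ) - 2 * k ^ 3 ≤ (B.card : ℤ) ∧
      ∀ l : ℕ, 1 ≤ l → ∀ f : Fin l → ℕ,
        (∀ i, f i ∈ (Finset.Icc 1 k).filter (fun j => ¬ IsWeakBkSet j B)) →
        (∑ i, f i) ∉ Finset.Icc 1 k \ ((Finset.Icc 1 k).filter (fun j => ¬ IsWeakBkSet j B)) := by
  have hXA : (XsetB k A).card ≤ k := by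
    calc (XsetB k A).card ≤ (Finset.Icc 1 k).card := Finset.card_le_card (Finset.filter_subset _ _)
      _ = k := by rw [Nat.card_Icc]; omega
  obtain ⟨B, hBA, hBcard, hclosed⟩ := deletionB k k A hXA
  refine ⟨B, hBA, ?_, ?_⟩
  · have h1 : 2 * (k:ℤ) * k ≤ 2 * (k:ℤ) ^ 3 := by
      have hk1 : (1:ℤ) ≤ k := by exact_mod_cast hk
      have hk0 : (0:ℤ) ≤ k := by linarith
      nlinarith [mul_nonneg (mul_nonneg hk0 hk0) (sub_nonneg.2 hk1)]
    linarith
  · intro l hl f hf hmem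
    rw [Finset.mem_sdiff] at hmem
    obtain ⟨hmem1, hmem2⟩ := hmem
    apply hmem2
    obtain ⟨m, rfl⟩ : ∃ m, l = m + 1 := ⟨l - 1, by omega⟩
    have hub : (∑ i, f i) ≤ k := (Finset.mem_Icc.1 hmem1).2
    exact sumMem hclosed m f hf hub
end
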